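/- Let M be a finite monoid, N ∈ ℕ, and k ∈ {1,…,N}. There exist a finite set Q and a map assigning to every bough of level k (arising in any M-edge-labelled tree equipped with a forward Ramseyan split of height N) an element of Q, such that any two boughs of level k assigned the same element of Q are compatible. -/
import Mathlib


namespace P2601

/-- A relation is a well-quasi-ordering if every infinite sequence admits
`i < j` with `f i ≤ f j`. -/
def IsWqo {X : Type*} (le : X → X → Prop) : Prop :=
  ∀ f : ℕ → X, ∃ i j : ℕ, i < j ∧ le (f i) (f j)

/-- Finite rooted ordered binary trees with edge labels in `α`:
a node carries the labels of its left and right edges. -/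
inductive BT (α : Type) : Type
  | leaf : BT α
  | node : α → BT α → α → BT α → BT α

namespace BT
variable {α : Type}

/-- Nodes of a tree, encoded as lists of directions from the root
(`false` = left, `true` = right). -/
def valid : BT α → List Bool → Prop
  | _, [] => True
  | .leaf, _ :: _ => False
  | .node _ l _ _, false :: p => valid l p
  | .node _ _ _ r, true :: p => valid r p

/-- Subtree rooted at a position. -/
def sub : BT α → List Bool → BT α
  | t, [] => t
  | .leaf, _ :: _ => .leaf
  | .node _ l _ _, false :: p => sub l p
  | .node _ _ _ r, true :: p => sub r p

/-- Leaf positions. -/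
def IsLeafPos (t : BT α) (p : List Bool) : Prop := t.valid p ∧ t.sub p = .leaf

/-- Product (in `M`, through the morphism determined by `μ`) of the edge
labels read along the downward path `p`. -/
def prodW {M : Type} [Monoid M] (μ : α → M) : BT α → List Bool → M
  | _, [] => 1
  | .leaf, _ :: _ => 1
  | .node a l _ _, false :: p => μ a * prodW μ l p
  | .node _ _ c r, true :: p => μ c * prodW μ r p

/-- A linear tree: every internal node has at most one non-leaf child. -/
def IsLinear : BT α → Prop
  | .leaf => True
  | .node _ l _ r => (l = .leaf ∧ IsLinear r) ∨ (r = .leaf ∧ IsLinear l)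

end BT

/-- `π_T(x,y)`: the product of the edge labels (through `μ`) along the
downward path from the node `x` to its descendant `y`. -/
def pi {α M : Type} [Monoid M] (μ : α → M) (t : BT α) (x y : List Bool) : M :=
  BT.prodW μ (t.sub x) (y.drop x.length)

/-- Strict ancestor relation on positions (strict prefix). -/
def SP (x y : List Bool) : Prop := x <+: y ∧ x ≠ y

/-- Longest common prefix: the least common ancestor of two nodes. -/
def lcp : List Bool → List Bool → List Bool
  | a :: x, b :: y => if a = b then a :: lcp x y else []
  | _, _ => []

/-- `x` lies strictly to the left of `y` in the sibling (left-to-right) order. -/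
def LeftOf (x y : List Bool) : Prop :=
  ∃ p : List Bool, (p ++ [false]) <+: x ∧ (p ++ [true]) <+: y

/-- `σ(x:y)`: the minimum split value of the nodes strictly between `x` and its
strict descendant `y`, and `N+1` if there is no such node. -/
def gap (N : ℕ) (σ : List Bool → ℕ) (x y : List Bool) : ℕ :=
  if h : (Finset.Ioo x.length y.length).Nonempty then
    (Finset.Ioo x.length y.length).inf' h (fun k => σ (y.take k))
  else N + 1

/-- A split of height `N`: every node receives a value in `{1,…,N}`. -/
def IsSplit {α : Type} (N : ℕ) (t : BT α) (σ : List Bool → ℕ) : Prop :=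
  ∀ p, t.valid p → 1 ≤ σ p ∧ σ p ≤ N

/-- `x` and `y` are `k`-neighbours: both have split value `k`, they are on a
common branch, and the split values strictly between them are `≥ k`. -/
def KNbr (N : ℕ) (σ : List Bool → ℕ) (k : ℕ) (x y : List Bool) : Prop :=
  σ x = k ∧ σ y = k ∧
    (x = y ∨ (SP x y ∧ k ≤ gap N σ x y) ∨ (SP y x ∧ k ≤ gap N σ y x))

/-- Forward Ramseyan split. -/
def FR {α M : Type} [Monoid M] (μ : α → M) (N : ℕ) (t : BT α)
    (σ : List Bool → ℕ) : Prop :=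
  ∀ k, 1 ≤ k → k ≤ N → ∀ x y x' y' : List Bool,
    t.valid x → t.valid y → t.valid x' → t.valid y' →
    KNbr N σ k x y → KNbr N σ k x x' → KNbr N σ k x y' →
    KNbr N σ k y x' → KNbr N σ k y y' → KNbr N σ k x' y' →
    SP x y → SP x' y' →
    pi μ t x y = pi μ t x y * pi μ t x' y'

/-- Gap-embedding between trees with splits: a tree embedding (preserving the
ancestor relation, least common ancestors and the sibling order) satisfying the
root gap property and the edge gap property. -/
def IsGapEmb {α β : Type} (N : ℕ) (t₁ : BT α) (σ₁ : List Bool → ℕ)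
    (t₂ : BT β) (σ₂ : List Bool → ℕ) (h : List Bool → List Bool) : Prop :=
  (∀ p, t₁.valid p → t₂.valid (h p)) ∧
  (∀ p q, t₁.valid p → t₁.valid q → h p = h q → p = q) ∧
  (∀ p q, t₁.valid p → t₁.valid q → SP p q → SP (h p) (h q)) ∧
  (∀ p q, t₁.valid p → t₁.valid q → h (lcp p q) = lcp (h p) (h q)) ∧
  (∀ p q, t₁.valid p → t₁.valid q → LeftOf p q → LeftOf (h p) (h q)) ∧
  σ₁ [] ≤ gap N σ₂ [] (h []) ∧
  (∀ p b, t₁.valid (p ++ [b]) → σ₁ (p ++ [b]) ≤ gap N σ₂ (h p) (h (p ++ [b])))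

/-- Markings of nodes. -/
inductive Mark : Type
  | marked | separating | dummy
deriving DecidableEq

/-- Well-marked nested tree condition. -/
def WellMarked {α : Type} (N : ℕ) (t : BT α) (σ : List Bool → ℕ)
    (ρ : List Bool → Mark) : Prop :=
  ρ [] = .marked ∧
  (∀ p q, t.valid p → t.valid q → ρ p = .marked → ρ q = .marked →
    ρ (lcp p q) = .marked) ∧
  (∀ k, 1 ≤ k → k ≤ N → ∀ x y z₁, t.valid x → t.valid y → t.valid z₁ →
    ρ x = .marked → ρ y = .marked → SP x z₁ → SP z₁ y →
    k < gap N σ x z₁ → σ z₁ = k → k ≤ gap N σ z₁ y →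
    ∃ z₂ z₃, t.valid z₂ ∧ t.valid z₃ ∧ SP z₁ z₂ ∧ z₂ <+: z₃ ∧ z₃ <+: y ∧
      σ z₂ = k ∧ σ z₃ = k ∧ k < gap N σ z₁ z₂ ∧ k ≤ gap N σ z₂ z₃ ∧
      k ≤ gap N σ z₃ y ∧ ρ z₁ = .marked ∧
      (ρ z₂ = .marked ∨ ρ z₂ = .separating))

/-- `z` is the closest ancestor of `x` having split value `k`. -/
def ClosestAnc (σ : List Bool → ℕ) (k : ℕ) (x z : List Bool) : Prop :=
  z <+: x ∧ σ z = k ∧ ∀ w, w <+: x → σ w = k → w <+: z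

/-- Marked gap-embedding between marked nested trees. -/
def IsMarkedGapEmb {M : Type} [Monoid M] (N : ℕ)
    (t₁ : BT M) (σ₁ : List Bool → ℕ) (ρ₁ : List Bool → Mark)
    (t₂ : BT M) (σ₂ : List Bool → ℕ) (ρ₂ : List Bool → Mark)
    (h : List Bool → List Bool) : Prop :=
  IsGapEmb N t₁ σ₁ t₂ σ₂ h ∧
  -- sends the root to the root
  h [] = [] ∧
  -- maps leaves to leaves
  (∀ p, t₁.IsLeafPos p → t₂.IsLeafPos (h p)) ∧
  -- respects the marking
  (∀ p, t₁.valid p → ρ₁ p = ρ₂ (h p)) ∧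
  -- respects local products
  (∀ p b, t₁.valid (p ++ [b]) → t₂.valid (h p ++ [b]) →
    pi id t₁ p (p ++ [b]) = pi id t₂ (h p) (h p ++ [b])) ∧
  -- respects neighbourhood products
  (∀ k, 1 ≤ k → k ≤ N → ∀ x z z', t₁.valid x →
    ClosestAnc σ₁ k x z → ClosestAnc σ₂ k (h x) z' →
    pi id t₁ z x = pi id t₂ z' (h x)) ∧
  -- gluing on non-dummy nodes
  (∀ p b, t₁.valid (p ++ [b]) → ρ₁ (p ++ [b]) ≠ .dummy →
    ∃ b', h (p ++ [b]) = h p ++ [b'])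

/-- `L`-bounded marked nested tree: every path of consecutive non-dummy nodes
has length at most `L`. -/
def LBounded {α : Type} (L : ℕ) (t : BT α) (ρ : List Bool → Mark) : Prop :=
  ∀ p q : List Bool, t.valid (p ++ q) →
    (∀ i, i ≤ q.length → ρ (p ++ q.take i) ≠ .dummy) → q.length ≤ L

/-- The edge relation of the graph interpreted from a tree by the monoid
interpretation determined by `μ` and `P ⊆ M³`. -/
def IPEdge {α M : Type} [Monoid M] (μ : α → M) (P : Set (M × M × M))
    (t : BT α) (x y : List Bool) : Prop :=
  (LeftOf x y ∧ (pi μ t [] (lcp x y), pi μ t (lcp x y) x, pi μ t (lcp x y) y) ∈ P) ∨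
  (LeftOf y x ∧ (pi μ t [] (lcp y x), pi μ t (lcp y x) y, pi μ t (lcp y x) x) ∈ P)

/-- One-hole contexts of binary trees (used to represent boughs: a bough is the
tree fragment between `b₀` and `b_n`, the hole being placed below `b_n`). -/
inductive CT (α : Type) : Type
  | hole : CT α
  | nodeL : α → CT α → α → BT α → CT α
  | nodeR : α → BT α → α → CT α → CT α

namespace CT
variable {α : Type}

/-- Position of the hole. -/
def holePos : CT α → List Bool
  | .hole => []
  | .nodeL _ c _ _ => false :: c.holePos
  | .nodeR _ _ _ c => true :: c.holePos

/-- Plugging a tree into the hole. -/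
def plug : CT α → BT α → BT α
  | .hole, s => s
  | .nodeL a c b r, s => .node a (c.plug s) b r
  | .nodeR a l b c, s => .node a l b (c.plug s)

end CT

/-- A bough of level `k`, represented by the one-hole context `c` (the hole
sits at the last backbone node `b_n`) together with its split `σ`: the root and
the hole position are backbone nodes (split value `k`), every node on the path
from the root to the hole has split value `≥ k`, and the dimension is `≥ 1`. -/
def IsBough {α : Type} (N k : ℕ) (c : CT α) (σ : List Bool → ℕ) : Prop :=
  c.holePos ≠ [] ∧
  (∀ p, (c.plug .leaf).valid p → 1 ≤ σ p ∧ σ p ≤ N) ∧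
  σ [] = k ∧ σ c.holePos = k ∧
  ∀ j, 0 < j → j < c.holePos.length → k ≤ σ (c.holePos.take j)

/-- Dimension of a bough: the number of backbone nodes below the root. -/
def boughDim {α : Type} (k : ℕ) (c : CT α) (σ : List Bool → ℕ) : ℕ :=
  ((Finset.Icc 1 c.holePos.length).filter fun j => σ (c.holePos.take j) = k).card

/-- `j` is the depth of a backbone node of the bough. -/
def Backbone {α : Type} (k : ℕ) (c : CT α) (σ : List Bool → ℕ) (j : ℕ) : Prop :=
  j ≤ c.holePos.length ∧ σ (c.holePos.take j) = k

/-- `m` is the first idempotent value `π(b₀,b₁)` of the bough. -/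
def FirstIdem {M : Type} [Monoid M] (k : ℕ) (c : CT M) (σ : List Bool → ℕ)
    (m : M) : Prop :=
  ∃ j, 0 < j ∧ j ≤ c.holePos.length ∧ σ (c.holePos.take j) = k ∧
    (∀ j', 0 < j' → j' < j → σ (c.holePos.take j') ≠ k) ∧
    m = pi id (c.plug .leaf) [] (c.holePos.take j)

/-- A context `C[□]` in which boughs are plugged. -/
structure BCtx (M : Type) where
  cRoot : CT M
  σRoot : List Bool → ℕ
  tLeft : BT M
  σLeft : List Bool → ℕ
  tRight : BT M
  σRight : List Bool → ℕ
  mLeft : M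
  mRight : M

/-- The tree `C[B]`. -/
def BCtx.plugB {M : Type} (C : BCtx M) (c : CT M) : BT M :=
  C.cRoot.plug (c.plug (BT.node C.mLeft C.tLeft C.mRight C.tRight))

/-- The split induced on `C[B]`. -/
def BCtx.plugSplit {M : Type} (C : BCtx M) (c : CT M) (σ : List Bool → ℕ) :
    List Bool → ℕ :=
  fun p =>
    if C.cRoot.holePos.isPrefixOf p then
      let q := p.drop C.cRoot.holePos.length
      if c.holePos.isPrefixOf q then
        match q.drop c.holePos.length with
        | [] => σ q
        | false :: rest => C.σLeft rest
        | true :: rest => C.σRight rest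
      else σ q
    else C.σRoot p

/-- Two boughs of level `k` are compatible: same first idempotent value, and
every context making the first forward Ramseyan makes the second forward
Ramseyan. -/
def Compatible {M : Type} [Monoid M] (N k : ℕ) (c : CT M) (σ : List Bool → ℕ)
    (c' : CT M) (σ' : List Bool → ℕ) : Prop :=
  (∀ m, FirstIdem k c σ m ↔ FirstIdem k c' σ' m) ∧
  ∀ C : BCtx M, FR id N (C.plugB c) (C.plugSplit c σ) →
    FR id N (C.plugB c') (C.plugSplit c' σ')

/-- A good bough with respect to the interpretation `I_P`. -/
def GoodBough {M : Type} [Monoid M] (P : Set (M × M × M)) (N k : ℕ)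
    (C : BCtx M) (c : CT M) (σ : List Bool → ℕ) : Prop :=
  ∃ (c' : CT M) (σ' : List Bool → ℕ), IsBough N k c' σ' ∧
    Compatible N k c σ c' σ' ∧
  ∃ h : List Bool → List Bool,
    -- h is an embedding of graphs from I_P(C[B]) to I_P(C[H])
    (∀ x, (C.plugB c).IsLeafPos x → (C.plugB c').IsLeafPos (h x)) ∧
    (∀ x y, (C.plugB c).IsLeafPos x → (C.plugB c).IsLeafPos y →
      h x = h y → x = y) ∧
    (∀ x y, (C.plugB c).IsLeafPos x → (C.plugB c).IsLeafPos y →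
      (IPEdge id P (C.plugB c) x y ↔ IPEdge id P (C.plugB c') (h x) (h y))) ∧
    -- h is the identity on the leaves of C[□]
    (∀ p, ¬ (C.cRoot.holePos <+: p) → (C.plugB c).IsLeafPos p → h p = p) ∧
    (∀ q, (C.plugB c).IsLeafPos (C.cRoot.holePos ++ c.holePos ++ false :: q) →
      h (C.cRoot.holePos ++ c.holePos ++ false :: q) =
        C.cRoot.holePos ++ c'.holePos ++ false :: q) ∧
    (∀ q, (C.plugB c).IsLeafPos (C.cRoot.holePos ++ c.holePos ++ true :: q) →
      h (C.cRoot.holePos ++ c.holePos ++ true :: q) =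
        C.cRoot.holePos ++ c'.holePos ++ true :: q) ∧
    -- three consecutive blocks of H have no leaf in the image of h
    ∃ j₀ j₁ j₂ j₃, Backbone k c' σ' j₀ ∧ Backbone k c' σ' j₁ ∧
      Backbone k c' σ' j₂ ∧ Backbone k c' σ' j₃ ∧
      j₀ < j₁ ∧ j₁ < j₂ ∧ j₂ < j₃ ∧
      (∀ j, Backbone k c' σ' j →
        ¬ (j₀ < j ∧ j < j₁) ∧ ¬ (j₁ < j ∧ j < j₂) ∧ ¬ (j₂ < j ∧ j < j₃)) ∧
      (∀ x, (C.plugB c').IsLeafPos x →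
        (C.cRoot.holePos ++ c'.holePos.take j₀) <+: x →
        ¬ ((C.cRoot.holePos ++ c'.holePos.take j₃) <+: x) →
        ∀ y, (C.plugB c).IsLeafPos y → h y ≠ x)

/-! ### Classes of finite graphs -/

/-- A finite graph: a number of vertices together with a simple graph on them. -/
def FinGraph : Type := (n : ℕ) × SimpleGraph (Fin n)

/-- Labelled induced-subgraph embedding between labelled graphs. -/
def LabEmbOn {VG VH X : Type} (le : X → X → Prop)
    (adjG : VG → VG → Prop) (adjH : VH → VH → Prop)
    (lG : VG → X) (lH : VH → X) : Prop :=
  ∃ f : VG → VH, Function.Injective f ∧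
    (∀ u v, adjG u v ↔ adjH (f u) (f v)) ∧ ∀ v, le (lG v) (lH (f v))

/-- The `(X,le)`-labelled graphs with underlying graph in `Cl` are WQO under
labelled induced-subgraph embeddings. -/
def ClassWqoWith (Cl : Set FinGraph) (X : Type) (le : X → X → Prop) : Prop :=
  ∀ G : ℕ → FinGraph, (∀ i, G i ∈ Cl) → ∀ l : (i : ℕ) → Fin (G i).1 → X,
    ∃ i j : ℕ, i < j ∧ LabEmbOn le (G i).2.Adj (G j).2.Adj (l i) (l j)

/-- 2-well-quasi-ordered class. -/
def TwoWqoClass (Cl : Set FinGraph) : Prop :=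
  ∀ X : Type, Nonempty (X ≃ Fin 2) → ClassWqoWith Cl X Eq

/-- ∀-well-quasi-ordered class. -/
def ForallWqoClass (Cl : Set FinGraph) : Prop :=
  ∀ (X : Type) (le : X → X → Prop), Reflexive le → Transitive le → IsWqo le →
    ClassWqoWith Cl X le

/-- The graph `(V, adj)` is (isomorphic to) the interpretation of a tree. -/
def InImageOn {α M : Type} [Monoid M] (μ : α → M) (P : Set (M × M × M))
    (V : Type) (adj : V → V → Prop) : Prop :=
  ∃ (T : BT α) (e : V → List Bool), Function.Injective e ∧
    (∀ v, T.IsLeafPos (e v)) ∧ (∀ p, T.IsLeafPos p → ∃ v, e v = p) ∧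
    ∀ u v, adj u v ↔ IPEdge μ P T (e u) (e v)

/-- The image of the monoid interpretation `(μ, P)`, as a class of graphs. -/
def ImageClass {α M : Type} [Monoid M] (μ : α → M) (P : Set (M × M × M)) :
    Set FinGraph :=
  {G | InImageOn μ P (Fin G.1) G.2.Adj}

/-- Hereditary class (closed under induced subgraphs). -/
def HereditaryClass (Cl : Set FinGraph) : Prop :=
  ∀ G ∈ Cl, ∀ H : FinGraph,
    (∃ f : Fin H.1 → Fin G.1, Function.Injective f ∧
      ∀ u v, H.2.Adj u v ↔ G.2.Adj (f u) (f v)) → H ∈ Cl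


/-! ### Regular and periodic sequences of graphs -/

/-- The edge relation of the `r`-th graph `G^r` of the regular sequence
`(G₀, ℓ, C₀, F₀)`, on vertex set `Fin m × Fin r`. -/
def regAdj {m : ℕ} {Sig : Type} (G₀ : SimpleGraph (Fin m)) (ℓ : Fin m → Sig)
    (C₀ F₀ : Set (Sig × Sig)) (r : ℕ) :
    (Fin m × Fin r) → (Fin m × Fin r) → Prop := fun a b =>
  (a.2 = b.2 ∧ G₀.Adj a.1 b.1) ∨
  ((a.2 : ℕ) + 1 = (b.2 : ℕ) ∧ (ℓ a.1, ℓ b.1) ∈ C₀) ∨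
  ((b.2 : ℕ) + 1 = (a.2 : ℕ) ∧ (ℓ b.1, ℓ a.1) ∈ C₀) ∨
  ((a.2 : ℕ) + 1 < (b.2 : ℕ) ∧ (ℓ a.1, ℓ b.1) ∈ F₀) ∨
  ((b.2 : ℕ) + 1 < (a.2 : ℕ) ∧ (ℓ b.1, ℓ a.1) ∈ F₀)

/-- Labels of the vertices of `G^r`: the label in `Sig` together with the
markers `▷` (first copy) and `◁` (last copy). -/
def regLabel {m : ℕ} {Sig : Type} (ℓ : Fin m → Sig) (r : ℕ) :
    Fin m × Fin r → Sig × Bool × Bool := fun a =>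
  (ℓ a.1, decide ((a.2 : ℕ) = 0), decide ((a.2 : ℕ) = r - 1))

/-- The regular sequence `(G₀, ℓ, C₀, F₀)` is a regular antichain. -/
def IsRegularAntichain {m : ℕ} {Sig : Type} (G₀ : SimpleGraph (Fin m))
    (ℓ : Fin m → Sig) (C₀ F₀ : Set (Sig × Sig)) : Prop :=
  ∀ r s : ℕ, 1 ≤ r → 1 ≤ s → r ≠ s →
    ¬ LabEmbOn Eq (regAdj G₀ ℓ C₀ F₀ r) (regAdj G₀ ℓ C₀ F₀ s)
        (regLabel ℓ r) (regLabel ℓ s)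

/-- The arcs of the directed graph `H^r` associated with a regular sequence. -/
def regArc {m : ℕ} {Sig : Type} (G₀ : SimpleGraph (Fin m)) (ℓ : Fin m → Sig)
    (C₀ F₀ : Set (Sig × Sig)) (r : ℕ) :
    (Fin m × Fin r) → (Fin m × Fin r) → Prop := fun a b =>
  ¬ (regAdj G₀ ℓ C₀ F₀ r a b ↔ (ℓ a.1, ℓ b.1) ∈ F₀)

/-- `i`-th letter of the infinite periodic word `w^ω`. -/
def perLetter {Sig : Type} {p : ℕ} (hp : 0 < p) (w : Fin p → Sig) (n : ℕ) : Sig :=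
  w ⟨n % p, Nat.mod_lt n hp⟩

/-- The edge relation of the `r`-th graph `G_{w^r}` of the periodic sequence
`(w, C₀, F₀)`, on vertex set `Fin (r * p)`. -/
def perAdj {Sig : Type} {p : ℕ} (hp : 0 < p) (w : Fin p → Sig)
    (C₀ F₀ : Set (Sig × Sig)) (r : ℕ) :
    Fin (r * p) → Fin (r * p) → Prop := fun a b =>
  ((a : ℕ) + 1 = (b : ℕ) ∧ (perLetter hp w a, perLetter hp w b) ∈ C₀) ∨
  ((b : ℕ) + 1 = (a : ℕ) ∧ (perLetter hp w b, perLetter hp w a) ∈ C₀) ∨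
  ((a : ℕ) + 1 < (b : ℕ) ∧ (perLetter hp w a, perLetter hp w b) ∈ F₀) ∨
  ((b : ℕ) + 1 < (a : ℕ) ∧ (perLetter hp w b, perLetter hp w a) ∈ F₀)

/-- Labels of the vertices of `G_{w^r}`: unlabelled (`0`) except the first
vertex (`1`, for `▷`) and the last vertex (`2`, for `◁`). -/
def perLabel (n : ℕ) (i : Fin n) : ℕ :=
  if (i : ℕ) = 0 then 1 else if (i : ℕ) = n - 1 then 2 else 0

/-- The periodic sequence `(w, C₀, F₀)` is a periodic antichain. -/
def IsPeriodicAntichain {Sig : Type} {p : ℕ} (hp : 0 < p) (w : Fin p → Sig)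
    (C₀ F₀ : Set (Sig × Sig)) : Prop :=
  ∀ r s : ℕ, 1 ≤ r → 1 ≤ s → r ≠ s →
    ¬ LabEmbOn Eq (perAdj hp w C₀ F₀ r) (perAdj hp w C₀ F₀ s)
        (perLabel (r * p)) (perLabel (s * p))

/-! ### Existential first-order formulas over labelled graphs -/

/-- Quantifier-free formulas in the language of `Sig`-labelled graphs,
with variables in `α`. -/
inductive QF (Sig : Type) (α : Type) : Type
  | tru : QF Sig α
  | eq : α → α → QF Sig α
  | edge : α → α → QF Sig α
  | lab : Sig → α → QF Sig α
  | not : QF Sig α → QF Sig α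
  | and : QF Sig α → QF Sig α → QF Sig α
  | or : QF Sig α → QF Sig α → QF Sig α

/-- Evaluation of quantifier-free formulas in a labelled graph. -/
def QF.eval {Sig α V : Type} (adj : V → V → Prop) (lb : V → Sig)
    (ass : α → V) : QF Sig α → Prop
  | .tru => True
  | .eq i j => ass i = ass j
  | .edge i j => adj (ass i) (ass j)
  | .lab a i => lb (ass i) = a
  | .not φ => ¬ QF.eval adj lb ass φ
  | .and φ ψ => QF.eval adj lb ass φ ∧ QF.eval adj lb ass ψ
  | .or φ ψ => QF.eval adj lb ass φ ∨ QF.eval adj lb ass ψ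

/-- Existential first-order formulas: a block of `k` existential quantifiers
followed by a quantifier-free formula. -/
structure EF (Sig : Type) (α : Type) : Type where
  k : ℕ
  body : QF Sig (α ⊕ Fin k)

/-- Satisfaction of an existential formula in a labelled graph, under an
assignment of the free variables. -/
def EF.Realize {Sig α V : Type} (adj : V → V → Prop) (lb : V → Sig)
    (φ : EF Sig α) (ass : α → V) : Prop :=
  ∃ w : Fin φ.k → V, φ.body.eval adj lb (Sum.elim ass w)

/-- Adjacency in the path graph on `n` vertices. -/
def pathAdj (n : ℕ) (i j : Fin n) : Prop :=
  (i : ℕ) + 1 = (j : ℕ) ∨ (j : ℕ) + 1 = (i : ℕ)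



/-! ### Auxiliary material for `finitely_many_boughs` -/

attribute [local instance] Classical.propDecidable

namespace BT

variable {α : Type} {M : Type} [Monoid M]

@[simp] theorem sub_nil (t : BT α) : t.sub [] = t := by cases t <;> rfl

@[simp] theorem valid_nil (t : BT α) : t.valid [] := by cases t <;> trivial

@[simp] theorem prodW_nil (μ : α → M) (t : BT α) : BT.prodW μ t [] = 1 := by
  cases t <;> rfl

theorem sub_leaf (p : List Bool) : (BT.leaf : BT α).sub p = BT.leaf := by
  cases p with
  | nil => rfl
  | cons b q => cases b <;> rfl

theorem prodW_leaf (μ : α → M) (p : List Bool) : BT.prodW μ (BT.leaf : BT α) p = 1 := by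
  cases p with
  | nil => rfl
  | cons b q => cases b <;> rfl

theorem valid_leaf_iff (p : List Bool) : (BT.leaf : BT α).valid p ↔ p = [] := by
  cases p with
  | nil => simp [BT.valid]
  | cons b q => simp [BT.valid]

theorem sub_append (t : BT α) (p q : List Bool) : t.sub (p ++ q) = (t.sub p).sub q := by
  induction p generalizing t with
  | nil => simp
  | cons b p ih =>
    cases t with
    | leaf => simp [List.cons_append, BT.sub, sub_leaf]
    | node a l c r => cases b <;> exact ih _

theorem valid_append (t : BT α) (p q : List Bool) :
    t.valid (p ++ q) ↔ t.valid p ∧ (t.sub p).valid q := by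
  induction p generalizing t with
  | nil => simp
  | cons b p ih =>
    cases t with
    | leaf => simp [List.cons_append, BT.valid, sub_leaf, valid_leaf_iff]
    | node a l c r => cases b <;> exact ih _

theorem valid_of_valid_append (t : BT α) (p q : List Bool) (h : t.valid (p ++ q)) :
    t.valid p := ((valid_append t p q).mp h).1

theorem valid_prefix (t : BT α) {p q : List Bool} (hpq : p <+: q) (h : t.valid q) :
    t.valid p := by
  obtain ⟨d, rfl⟩ := hpq
  exact valid_of_valid_append t p d h

theorem prodW_append (μ : α → M) (t : BT α) (p q : List Bool) :
    BT.prodW μ t (p ++ q) = BT.prodW μ t p * BT.prodW μ (t.sub p) q := by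
  induction p generalizing t with
  | nil => simp
  | cons b p ih =>
    cases t with
    | leaf => simp [List.cons_append, BT.prodW, sub_leaf, prodW_leaf]
    | node a l c r =>
      cases b <;> simp [List.cons_append, BT.prodW, BT.sub, ih, mul_assoc]

end BT

theorem pi_trans {α M : Type} [Monoid M] (μ : α → M) (t : BT α) {x y z : List Bool}
    (hxy : x <+: y) (hyz : y <+: z) :
    pi μ t x z = pi μ t x y * pi μ t y z := by
  obtain ⟨a, rfl⟩ := hxy
  obtain ⟨b, rfl⟩ := hyz
  unfold pi
  have h1 : (x ++ a).drop x.length = a := by simp [List.drop_append]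
  have h2 : (x ++ a ++ b).drop x.length = a ++ b := by
    rw [List.append_assoc]; simp [List.drop_append]
  have h3 : (x ++ a ++ b).drop (x ++ a).length = b := by
    simp [List.drop_append]
  rw [h1, h2, h3, BT.prodW_append, BT.sub_append]

theorem SP_cons {b : Bool} {l₁ l₂ : List Bool} : SP (b :: l₁) (b :: l₂) ↔ SP l₁ l₂ := by
  unfold SP
  simp [List.cons_prefix_cons]

theorem SP_append_left {l : List Bool} {l₁ l₂ : List Bool} :
    SP (l ++ l₁) (l ++ l₂) ↔ SP l₁ l₂ := by
  unfold SP
  simp [List.prefix_append_right_inj]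

namespace CT

variable {α : Type} {M : Type} [Monoid M]

theorem valid_plug_holePos (ct : CT α) (s : BT α) : (ct.plug s).valid ct.holePos := by
  induction ct with
  | hole => exact BT.valid_nil s
  | nodeL a c b r ih => exact ih
  | nodeR a l b c ih => exact ih

theorem plug_sub_holePos (ct : CT α) (s : BT α) : (ct.plug s).sub ct.holePos = s := by
  induction ct with
  | hole => exact BT.sub_nil s
  | nodeL a c b r ih => exact ih
  | nodeR a l b c ih => exact ih

theorem plug_valid_append (ct : CT α) (s : BT α) (q : List Bool) :
    (ct.plug s).valid (ct.holePos ++ q) ↔ s.valid q := by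
  rw [BT.valid_append, plug_sub_holePos]
  simp [valid_plug_holePos]

theorem plug_prodW_off (μ : α → M) (ct : CT α) (s s' : BT α) :
    ∀ x p : List Bool, ¬ SP ct.holePos (x ++ p) →
      BT.prodW μ ((ct.plug s).sub x) p = BT.prodW μ ((ct.plug s').sub x) p := by
  induction ct with
  | hole =>
    intro x p hsp
    have hxp : x ++ p = [] := by
      by_contra hne
      exact hsp ⟨List.nil_prefix, fun e => hne e.symm⟩
    obtain ⟨hx, hp⟩ := List.append_eq_nil_iff.mp hxp
    subst hx; subst hp; simp
  | nodeL a c b r ih =>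
    intro x p hsp
    cases x with
    | nil =>
      simp only [BT.sub_nil] at *
      cases p with
      | nil => simp
      | cons pb p' =>
        cases pb with
        | false =>
          have hsp' : ¬ SP c.holePos ([] ++ p') := by
            intro hh
            exact hsp ((SP_cons (b := false)).mpr (by simpa using hh))
          have hih := ih [] p' hsp'
          simp only [BT.sub_nil] at hih
          exact congrArg (μ a * ·) hih
        | true => rfl
    | cons xb x' =>
      cases xb with
      | false =>
        have hsp' : ¬ SP c.holePos (x' ++ p) := fun hh =>
          hsp ((SP_cons (b := false)).mpr hh)
        exact ih x' p hsp'
      | true => rfl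
  | nodeR a l b c ih =>
    intro x p hsp
    cases x with
    | nil =>
      simp only [BT.sub_nil] at *
      cases p with
      | nil => simp
      | cons pb p' =>
        cases pb with
        | true =>
          have hsp' : ¬ SP c.holePos ([] ++ p') := by
            intro hh
            exact hsp ((SP_cons (b := true)).mpr (by simpa using hh))
          have hih := ih [] p' hsp'
          simp only [BT.sub_nil] at hih
          exact congrArg (μ b * ·) hih
        | false => rfl
    | cons xb x' =>
      cases xb with
      | true =>
        have hsp' : ¬ SP c.holePos (x' ++ p) := fun hh =>
          hsp ((SP_cons (b := true)).mpr hh)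
        exact ih x' p hsp'
      | false => rfl

theorem plug_valid_off (ct : CT α) (s s' : BT α) :
    ∀ x p : List Bool, ¬ SP ct.holePos (x ++ p) →
      (((ct.plug s).sub x).valid p ↔ ((ct.plug s').sub x).valid p) := by
  induction ct with
  | hole =>
    intro x p hsp
    have hxp : x ++ p = [] := by
      by_contra hne
      exact hsp ⟨List.nil_prefix, fun e => hne e.symm⟩
    obtain ⟨hx, hp⟩ := List.append_eq_nil_iff.mp hxp
    subst hx; subst hp; simp
  | nodeL a c b r ih =>
    intro x p hsp
    cases x with
    | nil =>
      simp only [BT.sub_nil] at *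
      cases p with
      | nil => simp
      | cons pb p' =>
        cases pb with
        | false =>
          have hsp' : ¬ SP c.holePos ([] ++ p') := by
            intro hh
            exact hsp ((SP_cons (b := false)).mpr (by simpa using hh))
          have hih := ih [] p' hsp'
          simp only [BT.sub_nil] at hih
          exact hih
        | true => exact Iff.rfl
    | cons xb x' =>
      cases xb with
      | false =>
        have hsp' : ¬ SP c.holePos (x' ++ p) := fun hh =>
          hsp ((SP_cons (b := false)).mpr hh)
        exact ih x' p hsp'
      | true => exact Iff.rfl
  | nodeR a l b c ih =>
    intro x p hsp
    cases x with
    | nil =>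
      simp only [BT.sub_nil] at *
      cases p with
      | nil => simp
      | cons pb p' =>
        cases pb with
        | true =>
          have hsp' : ¬ SP c.holePos ([] ++ p') := by
            intro hh
            exact hsp ((SP_cons (b := true)).mpr (by simpa using hh))
          have hih := ih [] p' hsp'
          simp only [BT.sub_nil] at hih
          exact hih
        | false => exact Iff.rfl
    | cons xb x' =>
      cases xb with
      | true =>
        have hsp' : ¬ SP c.holePos (x' ++ p) := fun hh =>
          hsp ((SP_cons (b := true)).mpr hh)
        exact ih x' p hsp'
      | false => exact Iff.rfl

theorem plug_valid_eq (ct : CT α) (s s' : BT α) {p : List Bool} (h : ¬ SP ct.holePos p) :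
    (ct.plug s).valid p ↔ (ct.plug s').valid p := by
  have hh := plug_valid_off ct s s' [] p (by simpa using h)
  simpa [BT.sub_nil] using hh

theorem plug_pi_eq (μ : α → M) (ct : CT α) (s s' : BT α) {x y : List Bool}
    (hxy : x <+: y) (h : ¬ SP ct.holePos y) :
    pi μ (ct.plug s) x y = pi μ (ct.plug s') x y := by
  obtain ⟨a, rfl⟩ := hxy
  unfold pi
  have hd : (x ++ a).drop x.length = a := by simp [List.drop_append]
  rw [hd]
  exact plug_prodW_off μ ct s s' x a h

theorem pi_plug_shift (μ : α → M) (ct : CT α) (s : BT α) (a b : List Bool) :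
    pi μ (ct.plug s) (ct.holePos ++ a) (ct.holePos ++ b) = pi μ s a b := by
  unfold pi
  rw [BT.sub_append, plug_sub_holePos]
  congr 1
  simp [List.drop_append]

theorem not_SP_holePos_of_valid_leaf (ct : CT α) {p : List Bool}
    (hp : (ct.plug .leaf).valid p) : ¬ SP ct.holePos p := by
  rintro ⟨⟨d, rfl⟩, hne⟩
  have hd : d ≠ [] := by rintro rfl; exact hne (by simp)
  have h2 := (plug_valid_append ct .leaf d).mp hp
  rw [BT.valid_leaf_iff] at h2
  exact hd h2

theorem valid_plug_of_leaf (ct : CT α) (s : BT α) {p : List Bool}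
    (hp : (ct.plug .leaf).valid p) : (ct.plug s).valid p :=
  (plug_valid_eq ct .leaf s (not_SP_holePos_of_valid_leaf ct hp)).mp hp

theorem valid_leaf_of_plug (ct : CT α) (s : BT α) {p : List Bool}
    (hp : (ct.plug s).valid p) (h : ¬ SP ct.holePos p) : (ct.plug .leaf).valid p :=
  (plug_valid_eq ct s .leaf h).mp hp

theorem pi_plug_leaf_eq (μ : α → M) (ct : CT α) (s : BT α) {x y : List Bool}
    (hxy : x <+: y) (hy : (ct.plug .leaf).valid y) :
    pi μ (ct.plug s) x y = pi μ (ct.plug .leaf) x y :=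
  plug_pi_eq μ ct s .leaf hxy (not_SP_holePos_of_valid_leaf ct hy)

end CT

theorem le_gap_iff {N : ℕ} {σ : List Bool → ℕ} {x y : List Bool} {k : ℕ} (hk : k ≤ N + 1) :
    k ≤ gap N σ x y ↔ ∀ ℓ, x.length < ℓ → ℓ < y.length → k ≤ σ (y.take ℓ) := by
  unfold gap
  split
  · next h =>
    rw [Finset.le_inf'_iff]
    constructor
    · intro H ℓ h1 h2; exact H ℓ (Finset.mem_Ioo.mpr ⟨h1, h2⟩)
    · intro H ℓ hℓ
      obtain ⟨h1, h2⟩ := Finset.mem_Ioo.mp hℓ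
      exact H ℓ h1 h2
  · next h =>
    constructor
    · intro _ ℓ h1 h2
      exact absurd ⟨ℓ, Finset.mem_Ioo.mpr ⟨h1, h2⟩⟩ h
    · intro _; exact hk

theorem take_of_prefix {l₁ l₂ : List Bool} (h : l₁ <+: l₂) {n : ℕ} (hn : n ≤ l₁.length) :
    l₂.take n = l₁.take n := by
  obtain ⟨s, rfl⟩ := h
  simp [List.take_append, Nat.sub_eq_zero_of_le hn]

theorem take_append_len (w a : List Bool) (n : ℕ) :
    (w ++ a).take (w.length + n) = w ++ a.take n := by
  simp [List.take_append]

theorem drop_append_len (w a : List Bool) :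
    (w ++ a).drop w.length = a := by
  simp [List.drop_append]

theorem KNbr_symm {N : ℕ} {σ : List Bool → ℕ} {k : ℕ} {x y : List Bool}
    (h : KNbr N σ k x y) : KNbr N σ k y x := by
  obtain ⟨h1, h2, h3⟩ := h
  refine ⟨h2, h1, ?_⟩
  rcases h3 with he | hsp | hsp
  · exact Or.inl he.symm
  · exact Or.inr (Or.inr hsp)
  · exact Or.inr (Or.inl hsp)

theorem KNbr_refl {N : ℕ} {σ : List Bool → ℕ} {k : ℕ} {x : List Bool}
    (h : σ x = k) : KNbr N σ k x x := ⟨h, h, Or.inl rfl⟩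

theorem SP.trans_prefix {x y z : List Bool} (h1 : SP x y) (h2 : y <+: z) : SP x z := by
  obtain ⟨hp, hne⟩ := h1
  refine ⟨hp.trans h2, fun he => hne ?_⟩
  subst he
  have hl : x.length = y.length := by
    have := hp.length_le
    have := h2.length_le
    omega
  exact hp.eq_of_length hl

theorem prefix_SP_trans {x y z : List Bool} (h1 : x <+: y) (h2 : SP y z) : SP x z := by
  obtain ⟨hp, hne⟩ := h2
  refine ⟨h1.trans hp, fun he => hne ?_⟩
  subst he
  have hl : y.length = x.length := by
    have := hp.length_le
    have := h1.length_le
    omega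
  exact hp.eq_of_length hl

theorem SP_iff_length {x y : List Bool} (h : x <+: y) :
    SP x y ↔ x.length < y.length := by
  constructor
  · rintro ⟨hp, hne⟩
    rcases lt_or_eq_of_le hp.length_le with hl | hl
    · exact hl
    · exact absurd (hp.eq_of_length hl) hne
  · intro hl
    exact ⟨h, fun he => by simp [he] at hl⟩

theorem not_SP_and_SP_rev {x y : List Bool} (h1 : SP x y) (h2 : SP y x) : False := by
  have l1 := (SP_iff_length h1.1).mp h1
  have l2 := (SP_iff_length h2.1).mp h2
  omega

namespace BCtx

variable {M : Type} [Monoid M]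

theorem plugSplit_off (C : BCtx M) (c : CT M) (σ : List Bool → ℕ) {p : List Bool}
    (h : ¬ C.cRoot.holePos <+: p) : C.plugSplit c σ p = C.σRoot p := by
  unfold BCtx.plugSplit
  rw [if_neg (by simpa [List.isPrefixOf_iff_prefix] using h)]

theorem plugSplit_region (C : BCtx M) (c : CT M) (σ : List Bool → ℕ) {q : List Bool}
    (hq : (c.plug .leaf).valid q) :
    C.plugSplit c σ (C.cRoot.holePos ++ q) = σ q := by
  have hpre : C.cRoot.holePos.isPrefixOf (C.cRoot.holePos ++ q) = true :=
    List.isPrefixOf_iff_prefix.mpr (List.prefix_append _ _)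
  have hdrop : (C.cRoot.holePos ++ q).drop C.cRoot.holePos.length = q :=
    drop_append_len _ _
  unfold BCtx.plugSplit
  rw [if_pos hpre]
  simp only [hdrop]
  by_cases hh : c.holePos <+: q
  · have hq2 : q = c.holePos := by
      obtain ⟨d, rfl⟩ := hh
      have h2 := (CT.plug_valid_append c .leaf d).mp hq
      rw [BT.valid_leaf_iff] at h2
      simp [h2]
    rw [if_pos (List.isPrefixOf_iff_prefix.mpr hh), hq2, List.drop_length]
  · rw [if_neg (by simpa [List.isPrefixOf_iff_prefix] using hh)]

theorem plugSplit_below (C : BCtx M) (c : CT M) (σ : List Bool → ℕ) (b : Bool)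
    (rest : List Bool) :
    C.plugSplit c σ (C.cRoot.holePos ++ (c.holePos ++ b :: rest)) =
      if b then C.σRight rest else C.σLeft rest := by
  have hpre : C.cRoot.holePos.isPrefixOf (C.cRoot.holePos ++ (c.holePos ++ b :: rest)) = true :=
    List.isPrefixOf_iff_prefix.mpr (List.prefix_append _ _)
  have hdrop : (C.cRoot.holePos ++ (c.holePos ++ b :: rest)).drop C.cRoot.holePos.length =
      c.holePos ++ b :: rest := drop_append_len _ _
  unfold BCtx.plugSplit
  rw [if_pos hpre]
  simp only [hdrop]
  rw [if_pos (List.isPrefixOf_iff_prefix.mpr (List.prefix_append _ _)), drop_append_len]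
  cases b <;> rfl

end BCtx

theorem take_append_of_le (w a : List Bool) {ℓ : ℕ} (h : w.length ≤ ℓ) :
    (w ++ a).take ℓ = w ++ a.take (ℓ - w.length) := by
  simp [List.take_append, List.take_of_length_le h]

theorem take_append_of_ge (w a : List Bool) {ℓ : ℕ} (h : ℓ ≤ w.length) :
    (w ++ a).take ℓ = w.take ℓ :=
  take_of_prefix (List.prefix_append w a) h

/-- The finite trace datatype used for the profile of a bough. -/
abbrev TraceData (M : Type) (N : ℕ) : Type :=
  Fin (N + 1) × (Fin 4 → Option (Option M × Option M)) × (Fin 4 → Fin 4 → Option (Option M))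

/-- A trace is realized in a bough. -/
def Realizes {M : Type} [Monoid M] (N : ℕ) (c : CT M) (σ : List Bool → ℕ)
    (T : TraceData M N) : Prop :=
  ∃ v : Fin 4 → List Bool,
    (∀ i eo xo, T.2.1 i = some (eo, xo) →
      (c.plug .leaf).valid (v i) ∧ σ (v i) = (T.1 : ℕ) ∧
      (∀ m, eo = some m → (T.1 : ℕ) ≤ gap N σ [] (v i) ∧
        pi id (c.plug .leaf) [] (v i) = m) ∧
      (∀ m, xo = some m → v i <+: c.holePos ∧ (T.1 : ℕ) ≤ gap N σ (v i) c.holePos ∧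
        pi id (c.plug .leaf) (v i) c.holePos = m)) ∧
    (∀ i j ro, T.2.2 i j = some ro →
      (ro = none → v i = v j) ∧
      (∀ m, ro = some m → SP (v i) (v j) ∧ (T.1 : ℕ) ≤ gap N σ (v i) (v j) ∧
        pi id (c.plug .leaf) (v i) (v j) = m))

/-- The profile of a bough: realizable traces, the first idempotents, and
the product from the root of the bough to the hole. -/
noncomputable def profile (M : Type) [Monoid M] (N k : ℕ) (c : CT M)
    (σ : List Bool → ℕ) : (TraceData M N → Bool) × (M → Bool) × M :=
  (fun T => decide (Realizes N c σ T),
   fun m => decide (FirstIdem k c σ m),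
   pi id (c.plug .leaf) [] c.holePos)

theorem FR_transfer {M : Type} [Monoid M] (N k : ℕ) (hk1 : 1 ≤ k) (hkN : k ≤ N)
    (c : CT M) (σ : List Bool → ℕ) (c' : CT M) (σ' : List Bool → ℕ)
    (hb : IsBough N k c σ) (hb' : IsBough N k c' σ')
    (hpro : profile M N k c σ = profile M N k c' σ')
    (C : BCtx M) (hFR : FR id N (C.plugB c) (C.plugSplit c σ)) :
    FR id N (C.plugB c') (C.plugSplit c' σ') := by
  obtain ⟨hbne, hbnd, hσnil, hσhole, hmidlem⟩ := hb
  obtain ⟨hbne', hbnd', hσnil', hσhole', hmidlem'⟩ := hb'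
  set rt := C.cRoot.holePos with hrtdef
  set bo := c.holePos with hbodef
  set bo' := c'.holePos with hbo'def
  set K : BT M := BT.node C.mLeft C.tLeft C.mRight C.tRight with hKdef
  have hTc : C.plugB c = C.cRoot.plug (c.plug K) := rfl
  have hTc' : C.plugB c' = C.cRoot.plug (c'.plug K) := rfl
  set T : BT M := C.plugB c with hTdef
  set T' : BT M := C.plugB c' with hT'def
  set σT : List Bool → ℕ := C.plugSplit c σ with hσTdef
  set σT' : List Bool → ℕ := C.plugSplit c' σ' with hσT'def
  -- basic region facts
  have hrv : (c.plug BT.leaf).valid bo := by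
    have := (CT.plug_valid_append c BT.leaf []).mpr (BT.valid_nil _)
    simpa using this
  have hrv' : (c'.plug BT.leaf).valid bo' := by
    have := (CT.plug_valid_append c' BT.leaf []).mpr (BT.valid_nil _)
    simpa using this
  have hrvnil : (c.plug BT.leaf).valid ([] : List Bool) := BT.valid_nil _
  have hrvnil' : (c'.plug BT.leaf).valid ([] : List Bool) := BT.valid_nil _
  -- split evaluation
  have sOff : ∀ p : List Bool, ¬ rt <+: p → σT p = C.σRoot p := fun p hp =>
    BCtx.plugSplit_off C c σ hp
  have sOff' : ∀ p : List Bool, ¬ rt <+: p → σT' p = C.σRoot p := fun p hp =>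
    BCtx.plugSplit_off C c' σ' hp
  have sReg : ∀ {qq : List Bool}, (c.plug BT.leaf).valid qq → σT (rt ++ qq) = σ qq :=
    fun hq => BCtx.plugSplit_region C c σ hq
  have sReg' : ∀ {qq : List Bool}, (c'.plug BT.leaf).valid qq → σT' (rt ++ qq) = σ' qq :=
    fun hq => BCtx.plugSplit_region C c' σ' hq
  have srt : σT rt = k := by
    have := sReg hrvnil
    simpa [hσnil] using this
  have srt' : σT' rt = k := by
    have := sReg' hrvnil'
    simpa [hσnil'] using this
  have sBelow : ∀ (bb : Bool) (rest : List Bool),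
      σT (rt ++ (bo ++ bb :: rest)) = if bb then C.σRight rest else C.σLeft rest :=
    fun bb rest => BCtx.plugSplit_below C c σ bb rest
  have sBelow' : ∀ (bb : Bool) (rest : List Bool),
      σT' (rt ++ (bo' ++ bb :: rest)) = if bb then C.σRight rest else C.σLeft rest :=
    fun bb rest => BCtx.plugSplit_below C c' σ' bb rest
  -- all nodes on the hole path of a bough have split value ≥ k
  have hboAll : ∀ ℓ, 0 < ℓ → ℓ ≤ bo.length → k ≤ σ (bo.take ℓ) := by
    intro ℓ h1 h2
    rcases eq_or_lt_of_le h2 with he | hlt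
    · rw [he, List.take_length, hσhole]
    · exact hmidlem ℓ h1 hlt
  have hboAll' : ∀ ℓ, 0 < ℓ → ℓ ≤ bo'.length → k ≤ σ' (bo'.take ℓ) := by
    intro ℓ h1 h2
    rcases eq_or_lt_of_le h2 with he | hlt
    · rw [he, List.take_length, hσhole']
    · exact hmidlem' ℓ h1 hlt
  -- pi transfer lemmas
  have pOff : ∀ {a b2 : List Bool}, a <+: b2 → ¬ SP rt b2 →
      pi id T a b2 = pi id T' a b2 := by
    intro a b2 hpre hsp
    exact CT.plug_pi_eq id C.cRoot (c.plug K) (c'.plug K) hpre hsp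
  have pReg : ∀ {a b2 : List Bool}, a <+: b2 → (c.plug BT.leaf).valid b2 →
      pi id T (rt ++ a) (rt ++ b2) = pi id (c.plug BT.leaf) a b2 := by
    intro a b2 hpre hval
    calc pi id T (rt ++ a) (rt ++ b2) = pi id (c.plug K) a b2 :=
          CT.pi_plug_shift id C.cRoot (c.plug K) a b2
      _ = pi id (c.plug BT.leaf) a b2 := CT.pi_plug_leaf_eq id c K hpre hval
  have pReg' : ∀ {a b2 : List Bool}, a <+: b2 → (c'.plug BT.leaf).valid b2 →
      pi id T' (rt ++ a) (rt ++ b2) = pi id (c'.plug BT.leaf) a b2 := by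
    intro a b2 hpre hval
    calc pi id T' (rt ++ a) (rt ++ b2) = pi id (c'.plug K) a b2 :=
          CT.pi_plug_shift id C.cRoot (c'.plug K) a b2
      _ = pi id (c'.plug BT.leaf) a b2 := CT.pi_plug_leaf_eq id c' K hpre hval
  have pDD : ∀ d1 d2 : List Bool,
      pi id T ((rt ++ bo) ++ d1) ((rt ++ bo) ++ d2) = pi id K d1 d2 := by
    intro d1 d2
    rw [List.append_assoc, List.append_assoc]
    calc pi id T (rt ++ (bo ++ d1)) (rt ++ (bo ++ d2))
        = pi id (c.plug K) (bo ++ d1) (bo ++ d2) :=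
          CT.pi_plug_shift id C.cRoot (c.plug K) _ _
      _ = pi id K d1 d2 := CT.pi_plug_shift id c K d1 d2
  have pDD' : ∀ d1 d2 : List Bool,
      pi id T' ((rt ++ bo') ++ d1) ((rt ++ bo') ++ d2) = pi id K d1 d2 := by
    intro d1 d2
    rw [List.append_assoc, List.append_assoc]
    calc pi id T' (rt ++ (bo' ++ d1)) (rt ++ (bo' ++ d2))
        = pi id (c'.plug K) (bo' ++ d1) (bo' ++ d2) :=
          CT.pi_plug_shift id C.cRoot (c'.plug K) _ _
      _ = pi id K d1 d2 := CT.pi_plug_shift id c' K d1 d2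
  -- validity transfer
  have vOff : ∀ {p : List Bool}, ¬ SP rt p → (T.valid p ↔ T'.valid p) := by
    intro p hp
    exact CT.plug_valid_eq C.cRoot (c.plug K) (c'.plug K) hp
  have vReg : ∀ {qq : List Bool}, (c.plug BT.leaf).valid qq → T.valid (rt ++ qq) := by
    intro qq hq
    exact (CT.plug_valid_append C.cRoot (c.plug K) qq).mpr (CT.valid_plug_of_leaf c K hq)
  have vD : ∀ d : List Bool, (T.valid ((rt ++ bo) ++ d) ↔ K.valid d) := by
    intro d
    rw [List.append_assoc]
    exact Iff.trans (CT.plug_valid_append C.cRoot (c.plug K) (bo ++ d))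
      (CT.plug_valid_append c K d)
  have vD' : ∀ d : List Bool, (T'.valid ((rt ++ bo') ++ d) ↔ K.valid d) := by
    intro d
    rw [List.append_assoc]
    exact Iff.trans (CT.plug_valid_append C.cRoot (c'.plug K) (bo' ++ d))
      (CT.plug_valid_append c' K d)
  -- start of the FR proof
  intro k' hk1' hkN' x y x' y' hvx hvy hvx' hvy' nxy nxx' nxy' nyx' nyy' nx'y' spxy spx'y'
  have gp : k' ≤ N + 1 := by omega
  set u : Fin 4 → List Bool := ![x, y, x', y'] with hudef
  have hvu : ∀ i, T'.valid (u i) := by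
    intro i; fin_cases i
    exacts [hvx, hvy, hvx', hvy']
  have hσu : ∀ i, σT' (u i) = k' := by
    intro i; fin_cases i
    exacts [nxy.1, nxy.2.1, nx'y'.1, nx'y'.2.1]
  have hKn : ∀ i j, KNbr N σT' k' (u i) (u j) := by
    intro i j; fin_cases i <;> fin_cases j
    exacts [KNbr_refl nxy.1, nxy, nxx', nxy',
      KNbr_symm nxy, KNbr_refl nxy.2.1, nyx', nyy',
      KNbr_symm nxx', KNbr_symm nyx', KNbr_refl nx'y'.1, nx'y',
      KNbr_symm nxy', KNbr_symm nyy', KNbr_symm nx'y', KNbr_refl nx'y'.2.1]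
  -- classification
  set q : Fin 4 → List Bool := fun i => (u i).drop rt.length with hqdef
  have hI : ∀ i, rt <+: u i → ¬ SP (rt ++ bo') (u i) →
      u i = rt ++ q i ∧ (c'.plug BT.leaf).valid (q i) ∧ σ' (q i) = k' := by
    intro i hpre hnd
    obtain ⟨d, hd⟩ := hpre
    have hqd : q i = d := by rw [hqdef]; simp only []; rw [← hd, drop_append_len]
    have hud : u i = rt ++ q i := by rw [hqd, hd]
    have hvald : (c'.plug K).valid d := by
      have h5 := hvu i
      rw [← hd] at h5
      exact (CT.plug_valid_append C.cRoot (c'.plug K) d).mp h5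
    have hvleaf : (c'.plug BT.leaf).valid (q i) := by
      rw [hqd]
      refine CT.valid_leaf_of_plug c' K hvald ?_
      intro hspd
      exact hnd (by rw [← hd]; exact SP_append_left.mpr hspd)
    refine ⟨hud, hvleaf, ?_⟩
    have h1 := sReg' hvleaf
    rw [← hud] at h1
    rw [← h1]
    exact hσu i
  have hD : ∀ i, SP (rt ++ bo') (u i) →
      ∃ (bb : Bool) (rest : List Bool), u i = (rt ++ bo') ++ bb :: rest := by
    intro i hsp
    obtain ⟨⟨d, hd⟩, hne2⟩ := hsp
    cases d with
    | nil => exact absurd (by simpa using hd) hne2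
    | cons bb rest => exact ⟨bb, rest, hd.symm⟩
  -- the trace
  set lvl : Fin (N + 1) := ⟨k', by omega⟩ with hlvldef
  set Itest : Fin 4 → Prop := fun i => rt <+: u i ∧ ¬ SP (rt ++ bo') (u i) with hItdef
  set Ttr : TraceData M N :=
    (lvl,
     fun i => if Itest i then
        some ((if k' ≤ gap N σ' [] (q i) then
                some (pi id (c'.plug BT.leaf) [] (q i)) else none),
              (if q i <+: bo' ∧ k' ≤ gap N σ' (q i) bo' then
                some (pi id (c'.plug BT.leaf) (q i) bo') else none))
      else none,
     fun i j => if Itest i ∧ Itest j then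
        (if u i = u j then some none
         else if SP (q i) (q j) ∧ k' ≤ gap N σ' (q i) (q j) then
           some (some (pi id (c'.plug BT.leaf) (q i) (q j))) else none)
      else none) with hTtrdef
  have hlvlval : (Ttr.1 : ℕ) = k' := rfl
  have hreal' : Realizes N c' σ' Ttr := by
    refine ⟨q, ?_, ?_⟩
    · intro i eo xo heq
      by_cases hIi : Itest i
      · rw [show Ttr.2.1 i = some (_, _) from if_pos hIi] at heq
        have hpq := Option.some.inj heq
        injection hpq with heo hxo
        subst heo
        subst hxo
        obtain ⟨hud, hvleaf, hσq⟩ := hI i hIi.1 hIi.2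
        refine ⟨hvleaf, by rw [hlvlval]; exact hσq, ?_, ?_⟩
        · intro m hm
          by_cases hE : k' ≤ gap N σ' [] (q i)
          · rw [if_pos hE] at hm
            exact ⟨by rw [hlvlval]; exact hE, Option.some.inj hm⟩
          · rw [if_neg hE] at hm; cases hm
        · intro m hm
          by_cases hE : q i <+: bo' ∧ k' ≤ gap N σ' (q i) bo'
          · rw [if_pos hE] at hm
            exact ⟨hE.1, by rw [hlvlval]; exact hE.2, Option.some.inj hm⟩
          · rw [if_neg hE] at hm; cases hm
      · rw [show Ttr.2.1 i = none from if_neg hIi] at heq; cases heq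
    · intro i j ro heq
      by_cases hIij : Itest i ∧ Itest j
      · rw [show Ttr.2.2 i j = _ from if_pos hIij] at heq
        by_cases he : u i = u j
        · rw [if_pos he] at heq
          obtain rfl := Option.some.inj heq
          refine ⟨fun _ => ?_, fun m hm => by cases hm⟩
          rw [hqdef]; simp only []; rw [he]
        · rw [if_neg he] at heq
          by_cases hc : SP (q i) (q j) ∧ k' ≤ gap N σ' (q i) (q j)
          · rw [if_pos hc] at heq
            obtain rfl := Option.some.inj heq
            refine ⟨(fun hh => by cases hh), fun m hm => ?_⟩
            obtain rfl := Option.some.inj hm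
            exact ⟨hc.1, by rw [hlvlval]; exact hc.2, rfl⟩
          · rw [if_neg hc] at heq; cases heq
      · rw [show Ttr.2.2 i j = none from if_neg hIij] at heq; cases heq
  have hRe : Realizes N c σ Ttr := by
    have h1 := congrFun (congrArg Prod.fst hpro) Ttr
    exact (decide_eq_decide.mp h1).mpr hreal'
  have crossP : pi id (c.plug BT.leaf) [] bo = pi id (c'.plug BT.leaf) [] bo' :=
    congrArg (fun z => z.2.2) hpro
  obtain ⟨w, hw1, hw2⟩ := hRe
  -- consequences of the realization
  have hslot : ∀ i, Itest i → Ttr.2.1 i = some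
      ((if k' ≤ gap N σ' [] (q i) then
          some (pi id (c'.plug BT.leaf) [] (q i)) else none),
       (if q i <+: bo' ∧ k' ≤ gap N σ' (q i) bo' then
          some (pi id (c'.plug BT.leaf) (q i) bo') else none)) := by
    intro i hIi
    exact if_pos hIi
  have hwI : ∀ i, Itest i → (c.plug BT.leaf).valid (w i) ∧ σ (w i) = k' := by
    intro i hIi
    have := hw1 i _ _ (hslot i hIi)
    exact ⟨this.1, this.2.1⟩
  have hwEnt : ∀ i, Itest i → k' ≤ gap N σ' [] (q i) →
      k' ≤ gap N σ [] (w i) ∧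
        pi id (c.plug BT.leaf) [] (w i) = pi id (c'.plug BT.leaf) [] (q i) := by
    intro i hIi hE
    have := (hw1 i _ _ (hslot i hIi)).2.2.1 _ (if_pos hE)
    exact this
  have hwExit : ∀ i, Itest i → q i <+: bo' → k' ≤ gap N σ' (q i) bo' →
      w i <+: bo ∧ k' ≤ gap N σ (w i) bo ∧
        pi id (c.plug BT.leaf) (w i) bo = pi id (c'.plug BT.leaf) (q i) bo' := by
    intro i hIi h1 h2
    have := (hw1 i _ _ (hslot i hIi)).2.2.2 _ (if_pos ⟨h1, h2⟩)
    exact this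
  have hwEq : ∀ i j, Itest i → Itest j → u i = u j → w i = w j := by
    intro i j hIi hIj he
    have hrel : Ttr.2.2 i j = some none := by
      have h0 : Ttr.2.2 i j = _ := if_pos ⟨hIi, hIj⟩
      rw [h0, if_pos he]
    exact (hw2 i j _ hrel).1 rfl
  have hwSP : ∀ i j, Itest i → Itest j → u i ≠ u j → SP (q i) (q j) →
      k' ≤ gap N σ' (q i) (q j) →
      SP (w i) (w j) ∧ k' ≤ gap N σ (w i) (w j) ∧
        pi id (c.plug BT.leaf) (w i) (w j) = pi id (c'.plug BT.leaf) (q i) (q j) := by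
    intro i j hIi hIj hne hsp hg
    have hrel : Ttr.2.2 i j = some (some (pi id (c'.plug BT.leaf) (q i) (q j))) := by
      have h0 : Ttr.2.2 i j = _ := if_pos ⟨hIi, hIj⟩
      rw [h0, if_neg hne, if_pos ⟨hsp, hg⟩]
    exact (hw2 i j _ hrel).2 _ rfl
  -- the image nodes
  set Φ : Fin 4 → List Bool := fun i =>
    if rt <+: u i then
      (if SP (rt ++ bo') (u i) then (rt ++ bo) ++ (u i).drop (rt ++ bo').length
       else rt ++ w i)
    else u i with hΦdef
  have hΦA : ∀ i, ¬ rt <+: u i → Φ i = u i := by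
    intro i h; rw [hΦdef]; simp only []; rw [if_neg h]
  have hΦI : ∀ i, rt <+: u i → ¬ SP (rt ++ bo') (u i) → Φ i = rt ++ w i := by
    intro i h1 h2; rw [hΦdef]; simp only []; rw [if_pos h1, if_neg h2]
  have hΦD : ∀ i (bb : Bool) (rest : List Bool), u i = (rt ++ bo') ++ bb :: rest →
      Φ i = (rt ++ bo) ++ bb :: rest := by
    intro i bb rest he
    have h1 : rt <+: u i := by
      rw [he, List.append_assoc]; exact (List.prefix_append rt _)
    have h2 : SP (rt ++ bo') (u i) := by
      rw [he]
      exact ⟨List.prefix_append _ _, by simp⟩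
    rw [hΦdef]; simp only []; rw [if_pos h1, if_pos h2, he, drop_append_len]
  -- helpers for take positions
  have tSelf : ∀ z : List Bool, (rt ++ z).take rt.length = rt := by
    intro z; rw [take_append_of_ge _ _ le_rfl, List.take_length]
  have vtake : ∀ {z : List Bool}, (c.plug BT.leaf).valid z → ∀ n,
      (c.plug BT.leaf).valid (z.take n) :=
    fun hz n => BT.valid_prefix _ (List.take_prefix _ _) hz
  have vtake' : ∀ {z : List Bool}, (c'.plug BT.leaf).valid z → ∀ n,
      (c'.plug BT.leaf).valid (z.take n) :=
    fun hz n => BT.valid_prefix _ (List.take_prefix _ _) hz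
  have sMatchD : ∀ (bb : Bool) (rest : List Bool) (mm : ℕ),
      σT (((rt ++ bo) ++ bb :: rest).take (rt.length + bo.length + 1 + mm)) =
      σT' (((rt ++ bo') ++ bb :: rest).take (rt.length + bo'.length + 1 + mm)) := by
    intro bb rest mm
    have h1 : ((rt ++ bo) ++ bb :: rest).take (rt.length + bo.length + 1 + mm)
        = rt ++ (bo ++ bb :: rest.take mm) := by
      rw [List.append_assoc,
        show rt.length + bo.length + 1 + mm = rt.length + (bo.length + (mm + 1)) by omega,
        take_append_len, take_append_len, List.take_succ_cons]
    have h2 : ((rt ++ bo') ++ bb :: rest).take (rt.length + bo'.length + 1 + mm)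
        = rt ++ (bo' ++ bb :: rest.take mm) := by
      rw [List.append_assoc,
        show rt.length + bo'.length + 1 + mm = rt.length + (bo'.length + (mm + 1)) by omega,
        take_append_len, take_append_len, List.take_succ_cons]
    rw [h1, h2, sBelow, sBelow']
  -- split value of the images
  have hσΦ : ∀ i, σT (Φ i) = k' := by
    intro i
    by_cases hA : rt <+: u i
    · by_cases hDi : SP (rt ++ bo') (u i)
      · obtain ⟨bb, rest, hui⟩ := hD i hDi
        rw [hΦD i bb rest hui, List.append_assoc, sBelow]
        have h2 := hσu i
        rw [hui, List.append_assoc, sBelow'] at h2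
        exact h2
      · rw [hΦI i hA hDi, sReg (hwI i ⟨hA, hDi⟩).1]
        exact (hwI i ⟨hA, hDi⟩).2
    · rw [hΦA i hA, sOff _ hA, ← sOff' _ hA]
      exact hσu i
  -- validity of the images
  have hvΦ : ∀ i, T.valid (Φ i) := by
    intro i
    by_cases hA : rt <+: u i
    · by_cases hDi : SP (rt ++ bo') (u i)
      · obtain ⟨bb, rest, hui⟩ := hD i hDi
        rw [hΦD i bb rest hui]
        refine (vD _).mpr ((vD' _).mp ?_)
        rw [← hui]; exact hvu i
      · rw [hΦI i hA hDi]
        exact vReg (hwI i ⟨hA, hDi⟩).1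
    · rw [hΦA i hA]
      refine (vOff ?_).mpr (hvu i)
      intro hsp2; exact hA hsp2.1
  -- equal nodes get equal images
  have hΦeq : ∀ i j, u i = u j → Φ i = Φ j := by
    intro i j he
    by_cases hA : rt <+: u i
    · by_cases hDi : SP (rt ++ bo') (u i)
      · obtain ⟨bb, rest, hui⟩ := hD i hDi
        rw [hΦD i bb rest hui, hΦD j bb rest (by rw [← he]; exact hui)]
      · have hAj2 : rt <+: u j := by rw [← he]; exact hA
        have hDj2 : ¬ SP (rt ++ bo') (u j) := by rw [← he]; exact hDi
        rw [hΦI i hA hDi, hΦI j hAj2 hDj2,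
          hwEq i j ⟨hA, hDi⟩ ⟨hAj2, hDj2⟩ he]
    · have hAj2 : ¬ rt <+: u j := by rw [← he]; exact hA
      rw [hΦA i hA, hΦA j hAj2, he]
  -- the key transfer of strict pairs
  have key : ∀ i j, SP (u i) (u j) → k' ≤ gap N σT' (u i) (u j) →
      SP (Φ i) (Φ j) ∧ k' ≤ gap N σT (Φ i) (Φ j) ∧
        pi id T (Φ i) (Φ j) = pi id T' (u i) (u j) := by
    intro i j hsp hgap
    have hgapP := (le_gap_iff gp).mp hgap
    by_cases hAj : rt <+: u j
    case neg =>
      -- both nodes lie outside the context hole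
      have hAi : ¬ rt <+: u i := fun hh => hAj (hh.trans hsp.1)
      rw [hΦA i hAi, hΦA j hAj]
      refine ⟨hsp, ?_, ?_⟩
      · rw [le_gap_iff gp]
        intro ℓ h1 h2
        have hnpre : ¬ rt <+: (u j).take ℓ := fun hh =>
          hAj (hh.trans (List.take_prefix ℓ (u j)))
        rw [sOff _ hnpre, ← sOff' _ hnpre]
        exact hgapP ℓ h1 h2
      · exact pOff hsp.1 (fun hh => hAj hh.1)
    case pos =>
    by_cases hDj : SP (rt ++ bo') (u j)
    case pos =>
      obtain ⟨bb, rest, huj⟩ := hD j hDj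
      have hujlen : (u j).length = rt.length + bo'.length + 1 + rest.length := by
        rw [huj]; simp [List.length_append]; omega
      by_cases hAi : rt <+: u i
      case pos =>
        by_cases hDi : SP (rt ++ bo') (u i)
        case pos =>
          -- (D, D)
          obtain ⟨bi, resti, hui⟩ := hD i hDi
          have hpre2 : bi :: resti <+: bb :: rest := by
            have h0 := hsp.1
            rw [hui, huj] at h0
            exact (List.prefix_append_right_inj _).mp h0
          obtain ⟨hbib, hrr⟩ := List.cons_prefix_cons.mp hpre2
          subst hbib
          have hner : resti ≠ rest := by
            intro he; apply hsp.2; rw [hui, huj, he]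
          have huilen : (u i).length = rt.length + bo'.length + 1 + resti.length := by
            rw [hui]; simp [List.length_append]; omega
          rw [hΦD i bi resti hui, hΦD j bi rest huj]
          refine ⟨SP_append_left.mpr (SP_cons.mpr ⟨hrr, hner⟩), ?_, ?_⟩
          · rw [le_gap_iff gp]
            intro ℓ h1 h2
            have h1' : rt.length + bo.length + 1 + resti.length < ℓ := by
              have : ((rt ++ bo) ++ bi :: resti).length =
                  rt.length + bo.length + 1 + resti.length := by
                simp [List.length_append]; omega
              omega
            have h2' : ℓ < rt.length + bo.length + 1 + rest.length := by
              have : ((rt ++ bo) ++ bi :: rest).length =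
                  rt.length + bo.length + 1 + rest.length := by
                simp [List.length_append]; omega
              omega
            set mm := ℓ - rt.length - bo.length - 1 with hmmdef
            have hℓ : ℓ = rt.length + bo.length + 1 + mm := by omega
            rw [hℓ, sMatchD]
            have horig := hgapP (rt.length + bo'.length + 1 + mm)
              (by omega) (by omega)
            rw [huj] at horig
            exact horig
          · have p1 := pDD (bi :: resti) (bi :: rest)
            have p2 := pDD' (bi :: resti) (bi :: rest)
            rw [hui, huj, p1, ← p2]
        case neg =>
          -- (I, D)
          have hIi : Itest i := ⟨hAi, hDi⟩
          obtain ⟨hud_i, hvq_i, hσq_i⟩ := hI i hAi hDi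
          have huilen : (u i).length = rt.length + (q i).length := by
            rw [hud_i]; simp [List.length_append]
          have hqi_pre : q i <+: bo' := by
            have h0 : rt ++ q i <+: rt ++ (bo' ++ bb :: rest) := by
              rw [← hud_i, ← List.append_assoc, ← huj]
              exact hsp.1
            have h1 : q i <+: bo' ++ bb :: rest :=
              (List.prefix_append_right_inj rt).mp h0
            rcases List.prefix_or_prefix_of_prefix h1
              (List.prefix_append bo' (bb :: rest)) with h2 | h2
            · exact h2
            · by_cases he : bo' = q i
              · rw [← he]
              · exact absurd (by rw [hud_i]; exact SP_append_left.mpr ⟨h2, he⟩) hDi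
          have hqilen : (q i).length ≤ bo'.length := hqi_pre.length_le
          have hExitG : k' ≤ gap N σ' (q i) bo' := by
            rw [le_gap_iff gp]
            intro ℓ' h1' h2'
            have horig := hgapP (rt.length + ℓ') (by omega) (by omega)
            have htake : (u j).take (rt.length + ℓ') = rt ++ bo'.take ℓ' := by
              rw [huj, List.append_assoc, take_append_len,
                take_append_of_ge bo' (bb :: rest) (le_of_lt h2')]
            rw [htake, sReg' (vtake' hrv' ℓ')] at horig
            exact horig
          obtain ⟨hwpre, hwgap, hwpi⟩ := hwExit i hIi hqi_pre hExitG
          have hwlen : (w i).length ≤ bo.length := hwpre.length_le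
          have hk'k : k' ≤ k := by
            by_cases he : q i = bo'
            · rw [he, hσhole'] at hσq_i
              omega
            · have hlq : (q i).length < bo'.length := by
                rcases lt_or_eq_of_le hqilen with h3 | h3
                · exact h3
                · exact absurd (hqi_pre.eq_of_length h3) he
              have horig := hgapP (rt.length + bo'.length) (by omega) (by omega)
              have htake : (u j).take (rt.length + bo'.length) = rt ++ bo' := by
                rw [huj, List.append_assoc, take_append_len,
                  take_append_of_ge bo' (bb :: rest) le_rfl, List.take_length]
              rw [htake, sReg' hrv', hσhole'] at horig
              exact horig
          rw [hΦI i hAi hDi, hΦD j bb rest huj]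
          have hΦpre : rt ++ w i <+: rt ++ bo :=
            (List.prefix_append_right_inj rt).mpr hwpre
          refine ⟨?_, ?_, ?_⟩
          · refine (SP_iff_length (hΦpre.trans (List.prefix_append _ _))).mpr ?_
            simp only [List.length_append, List.length_cons]
            omega
          · rw [le_gap_iff gp]
            intro ℓ h1 h2
            have hl1 : (rt ++ w i).length = rt.length + (w i).length := by
              simp only [List.length_append]
            have hl2 : ((rt ++ bo) ++ bb :: rest).length =
                rt.length + bo.length + 1 + rest.length := by
              simp only [List.length_append, List.length_cons]; omega
            by_cases hc1 : ℓ ≤ rt.length + bo.length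
            · have htake : ((rt ++ bo) ++ bb :: rest).take ℓ =
                  rt ++ bo.take (ℓ - rt.length) := by
                rw [take_append_of_ge (rt ++ bo) _
                    (by simp only [List.length_append]; omega),
                  take_append_of_le rt bo (by omega)]
              rw [htake, sReg (vtake hrv _)]
              rcases lt_or_eq_of_le (show ℓ - rt.length ≤ bo.length by omega)
                with hlt | heq2
              · exact (le_gap_iff gp).mp hwgap _ (by omega) hlt
              · rw [heq2, List.take_length, hσhole]
                exact hk'k
            · push_neg at hc1
              set mm := ℓ - rt.length - bo.length - 1 with hmmdef
              have hℓ : ℓ = rt.length + bo.length + 1 + mm := by omega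
              rw [hℓ, sMatchD]
              have horig := hgapP (rt.length + bo'.length + 1 + mm)
                (by omega) (by omega)
              rw [huj] at horig
              exact horig
          · have hpD : (rt ++ bo) <+: (rt ++ bo) ++ bb :: rest :=
              List.prefix_append _ _
            have hpD' : (rt ++ bo') <+: (rt ++ bo') ++ bb :: rest :=
              List.prefix_append _ _
            rw [hud_i, huj,
              pi_trans id T (y := rt ++ bo) hΦpre hpD,
              pi_trans id T' (y := rt ++ bo')
                ((List.prefix_append_right_inj rt).mpr hqi_pre) hpD']
            have p1 := pReg hwpre hrv
            have p1' := pReg' hqi_pre hrv'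
            have p2 := pDD [] (bb :: rest)
            rw [List.append_nil] at p2
            have p2' := pDD' [] (bb :: rest)
            rw [List.append_nil] at p2'
            rw [p1, p1', p2, p2', hwpi]
      case neg =>
        -- (A, D)
        have hui_rt : SP (u i) rt := by
          rcases List.prefix_or_prefix_of_prefix hsp.1 hAj with h2 | h2
          · exact ⟨h2, fun he => hAi (he ▸ List.prefix_refl _)⟩
          · exact absurd h2 hAi
        have huilen : (u i).length < rt.length := (SP_iff_length hui_rt.1).mp hui_rt
        have hk'k3 : k' ≤ k := by
          have horig := hgapP rt.length (by omega) (by omega)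
          have htake : (u j).take rt.length = rt := by
            rw [huj, List.append_assoc]; exact tSelf _
          rw [htake, srt'] at horig
          exact horig
        have hpAD : rt <+: (rt ++ bo) ++ bb :: rest := by
          rw [List.append_assoc]; exact List.prefix_append _ _
        have hpAD' : rt <+: (rt ++ bo') ++ bb :: rest := by
          rw [List.append_assoc]; exact List.prefix_append _ _
        rw [hΦA i hAi, hΦD j bb rest huj]
        refine ⟨hui_rt.trans_prefix hpAD, ?_, ?_⟩
        · rw [le_gap_iff gp]
          intro ℓ h1 h2
          have hl2 : ((rt ++ bo) ++ bb :: rest).length =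
              rt.length + bo.length + 1 + rest.length := by
            simp only [List.length_append, List.length_cons]; omega
          by_cases hc1 : ℓ < rt.length
          · have htake : ((rt ++ bo) ++ bb :: rest).take ℓ = rt.take ℓ := by
              rw [List.append_assoc]; exact take_append_of_ge _ _ (le_of_lt hc1)
            have hnpre : ¬ rt <+: rt.take ℓ := by
              intro hh
              have h4 := hh.length_le
              simp [List.length_take] at h4
              omega
            rw [htake, sOff _ hnpre, ← sOff' _ hnpre]
            have horig := hgapP ℓ h1 (by omega)
            have htake2 : (u j).take ℓ = rt.take ℓ := by
              rw [huj, List.append_assoc]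
              exact take_append_of_ge _ _ (le_of_lt hc1)
            rw [htake2] at horig
            exact horig
          · push_neg at hc1
            rcases eq_or_lt_of_le hc1 with heq | hlt
            · have htake : ((rt ++ bo) ++ bb :: rest).take ℓ = rt := by
                rw [List.append_assoc, ← heq]; exact tSelf _
              rw [htake, srt]
              exact hk'k3
            · by_cases hc2 : ℓ ≤ rt.length + bo.length
              · have htake : ((rt ++ bo) ++ bb :: rest).take ℓ =
                    rt ++ bo.take (ℓ - rt.length) := by
                  rw [take_append_of_ge (rt ++ bo) _
                      (by simp only [List.length_append]; omega),
                    take_append_of_le rt bo (by omega)]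
                rw [htake, sReg (vtake hrv _)]
                exact le_trans hk'k3 (hboAll _ (by omega) (by omega))
              · push_neg at hc2
                set mm := ℓ - rt.length - bo.length - 1 with hmmdef
                have hℓ : ℓ = rt.length + bo.length + 1 + mm := by omega
                rw [hℓ, sMatchD]
                have horig := hgapP (rt.length + bo'.length + 1 + mm)
                  (by omega) (by omega)
                rw [huj] at horig
                exact horig
        · have hpD : (rt ++ bo) <+: (rt ++ bo) ++ bb :: rest :=
            List.prefix_append _ _
          have hpD' : (rt ++ bo') <+: (rt ++ bo') ++ bb :: rest :=
            List.prefix_append _ _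
          rw [huj,
            pi_trans id T (y := rt) hui_rt.1 hpAD,
            pi_trans id T' (y := rt) hui_rt.1 hpAD',
            pi_trans id T (x := rt) (y := rt ++ bo) (List.prefix_append rt bo) hpD,
            pi_trans id T' (x := rt) (y := rt ++ bo') (List.prefix_append rt bo') hpD']
          have p1 := pReg (List.nil_prefix) hrv
          rw [List.append_nil] at p1
          have p1' := pReg' (List.nil_prefix) hrv'
          rw [List.append_nil] at p1'
          have p2 := pDD [] (bb :: rest)
          rw [List.append_nil] at p2
          have p2' := pDD' [] (bb :: rest)
          rw [List.append_nil] at p2'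
          rw [p1, p1', p2, p2', crossP, pOff hui_rt.1 (fun hh => hh.2 rfl)]
    case neg =>
      -- j is an internal node of the bough
      have hIj : Itest j := ⟨hAj, hDj⟩
      obtain ⟨hud_j, hvq_j, hσq_j⟩ := hI j hAj hDj
      have hujlen : (u j).length = rt.length + (q j).length := by
        rw [hud_j]; simp [List.length_append]
      by_cases hAi : rt <+: u i
      case pos =>
        -- (I, I)
        have hDi : ¬ SP (rt ++ bo') (u i) := fun hh =>
          hDj (hh.trans_prefix hsp.1)
        have hIi : Itest i := ⟨hAi, hDi⟩
        obtain ⟨hud_i, hvq_i, hσq_i⟩ := hI i hAi hDi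
        have huilen : (u i).length = rt.length + (q i).length := by
          rw [hud_i]; simp [List.length_append]
        have hspq : SP (q i) (q j) := by
          have h0 := hsp
          rw [hud_i, hud_j] at h0
          exact SP_append_left.mp h0
        have hgq : k' ≤ gap N σ' (q i) (q j) := by
          rw [le_gap_iff gp]
          intro ℓ' h1' h2'
          have horig := hgapP (rt.length + ℓ') (by omega) (by omega)
          have htake : (u j).take (rt.length + ℓ') = rt ++ (q j).take ℓ' := by
            rw [hud_j, take_append_len]
          rw [htake, sReg' (vtake' hvq_j ℓ')] at horig
          exact horig
        obtain ⟨hwsp, hwgap, hwpi⟩ := hwSP i j hIi hIj hsp.2 hspq hgq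
        rw [hΦI i hAi hDi, hΦI j hAj hDj]
        refine ⟨SP_append_left.mpr hwsp, ?_, ?_⟩
        · rw [le_gap_iff gp]
          intro ℓ h1 h2
          have hl1 : (rt ++ w i).length = rt.length + (w i).length := by
            simp [List.length_append]
          have hl2 : (rt ++ w j).length = rt.length + (w j).length := by
            simp [List.length_append]
          have htake : (rt ++ w j).take ℓ = rt ++ (w j).take (ℓ - rt.length) :=
            take_append_of_le _ _ (by omega)
          rw [htake, sReg (vtake (hwI j hIj).1 _)]
          exact (le_gap_iff gp).mp hwgap _ (by omega) (by omega)
        · rw [pReg hwsp.1 (hwI j hIj).1, hud_i, hud_j, pReg' hspq.1 hvq_j, hwpi]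
      case neg =>
        -- (A, I)
        have hui_rt : SP (u i) rt := by
          rcases List.prefix_or_prefix_of_prefix hsp.1 hAj with h2 | h2
          · exact ⟨h2, fun he => hAi (he ▸ List.prefix_refl _)⟩
          · exact absurd h2 hAi
        have huilen : (u i).length < rt.length := (SP_iff_length hui_rt.1).mp hui_rt
        have hEnt : k' ≤ gap N σ' [] (q j) := by
          rw [le_gap_iff gp]
          intro ℓ' h1' h2'
          have horig := hgapP (rt.length + ℓ') (by omega) (by omega)
          have htake : (u j).take (rt.length + ℓ') = rt ++ (q j).take ℓ' := by
            rw [hud_j, take_append_len]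
          rw [htake, sReg' (vtake' hvq_j ℓ')] at horig
          exact horig
        obtain ⟨hwgap, hwpi⟩ := hwEnt j hIj hEnt
        have hk'k2 : k' ≤ k := by
          by_cases hqj : q j = []
          · have h3 := hσu j
            rw [hud_j, hqj, List.append_nil, srt'] at h3
            omega
          · have hlen : 0 < (q j).length := List.length_pos_iff.mpr hqj
            have horig := hgapP rt.length huilen (by omega)
            have htake : (u j).take rt.length = rt := by
              rw [hud_j]; exact tSelf _
            rw [htake, srt'] at horig
            exact horig
        rw [hΦA i hAi, hΦI j hAj hDj]
        refine ⟨hui_rt.trans_prefix (List.prefix_append rt (w j)), ?_, ?_⟩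
        · rw [le_gap_iff gp]
          intro ℓ h1 h2
          have hl2 : (rt ++ w j).length = rt.length + (w j).length := by
            simp [List.length_append]
          by_cases hc1 : ℓ < rt.length
          · have htake : (rt ++ w j).take ℓ = rt.take ℓ :=
              take_append_of_ge _ _ (le_of_lt hc1)
            have hnpre : ¬ rt <+: rt.take ℓ := by
              intro hh
              have h4 := hh.length_le
              simp [List.length_take] at h4
              omega
            rw [htake, sOff _ hnpre, ← sOff' _ hnpre]
            have horig := hgapP ℓ h1 (by omega)
            have htake2 : (u j).take ℓ = rt.take ℓ := by
              rw [hud_j]; exact take_append_of_ge _ _ (le_of_lt hc1)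
            rw [htake2] at horig
            exact horig
          · push_neg at hc1
            rcases eq_or_lt_of_le hc1 with heq | hlt
            · rw [← heq, tSelf, srt]
              exact hk'k2
            · have htake : (rt ++ w j).take ℓ = rt ++ (w j).take (ℓ - rt.length) :=
                take_append_of_le _ _ (by omega)
              rw [htake, sReg (vtake (hwI j hIj).1 _)]
              exact (le_gap_iff gp).mp hwgap _ (by simp; omega) (by omega)
        · rw [hud_j,
            pi_trans id T (y := rt) hui_rt.1 (List.prefix_append rt (w j)),
            pi_trans id T' (y := rt) hui_rt.1 (List.prefix_append rt (q j))]
          have p2 := pReg (List.nil_prefix) (hwI j hIj).1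
          rw [List.append_nil] at p2
          have p2' := pReg' (List.nil_prefix) hvq_j
          rw [List.append_nil] at p2'
          rw [p2, p2', hwpi, pOff hui_rt.1 (fun hh => hh.2 rfl)]
  -- transporting neighbourhoods
  have gxy : k' ≤ gap N σT' x y := by
    rcases nxy.2.2 with he | ⟨h1, h2⟩ | ⟨h1, h2⟩
    · exact absurd he spxy.2
    · exact h2
    · exact (not_SP_and_SP_rev spxy h1).elim
  have gx'y' : k' ≤ gap N σT' x' y' := by
    rcases nx'y'.2.2 with he | ⟨h1, h2⟩ | ⟨h1, h2⟩
    · exact absurd he spx'y'.2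
    · exact h2
    · exact (not_SP_and_SP_rev spx'y' h1).elim
  have hKΦ : ∀ i j, KNbr N σT' k' (u i) (u j) → KNbr N σT k' (Φ i) (Φ j) := by
    intro i j hk2
    refine ⟨hσΦ i, hσΦ j, ?_⟩
    rcases hk2.2.2 with he | ⟨h1, h2⟩ | ⟨h1, h2⟩
    · exact Or.inl (hΦeq i j he)
    · have hk3 := key i j h1 h2
      exact Or.inr (Or.inl ⟨hk3.1, hk3.2.1⟩)
    · have hk3 := key j i h1 h2
      exact Or.inr (Or.inr ⟨hk3.1, hk3.2.1⟩)
  have happ := hFR k' hk1' hkN' (Φ 0) (Φ 1) (Φ 2) (Φ 3) (hvΦ 0) (hvΦ 1) (hvΦ 2) (hvΦ 3)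
    (hKΦ 0 1 (hKn 0 1)) (hKΦ 0 2 (hKn 0 2)) (hKΦ 0 3 (hKn 0 3)) (hKΦ 1 2 (hKn 1 2))
    (hKΦ 1 3 (hKn 1 3)) (hKΦ 2 3 (hKn 2 3)) (key 0 1 spxy gxy).1 (key 2 3 spx'y' gx'y').1
  have e01 := (key 0 1 spxy gxy).2.2
  have e23 := (key 2 3 spx'y' gx'y').2.2
  rw [e01, e23] at happ
  exact happ

/-- There are finitely many boughs of level `k` up to compatibility: there is a
finite set `Q` and an assignment of elements of `Q` to boughs of level `k`
(arising in trees with forward Ramseyan splits of height `N`) such that boughs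
receiving the same element are compatible. -/
theorem finitely_many_boughs (M : Type) [Monoid M] [Fintype M] (N k : ℕ)
    (hk1 : 1 ≤ k) (hkN : k ≤ N) :
    ∃ (Q : Type) (_ : Fintype Q) (f : CT M → (List Bool → ℕ) → Q),
      ∀ (c : CT M) (σ : List Bool → ℕ) (c' : CT M) (σ' : List Bool → ℕ),
        IsBough N k c σ → IsBough N k c' σ' →
        (∃ C : BCtx M, IsSplit N (C.plugB c) (C.plugSplit c σ) ∧
          FR id N (C.plugB c) (C.plugSplit c σ)) →
        (∃ C : BCtx M, IsSplit N (C.plugB c') (C.plugSplit c' σ') ∧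
          FR id N (C.plugB c') (C.plugSplit c' σ')) →
        f c σ = f c' σ' → Compatible N k c σ c' σ' := by
  classical
  letI : DecidableEq M := Classical.decEq M
  refine ⟨(TraceData M N → Bool) × (M → Bool) × M, inferInstance,
    fun c σ => profile M N k c σ, ?_⟩
  intro c σ c' σ' hb hb' _ _ hf
  constructor
  · intro m
    have h2 := congrFun (congrArg (fun z => z.2.1) hf) m
    exact decide_eq_decide.mp h2
  · intro C hFR
    exact FR_transfer N k hk1 hkN c σ c' σ' hb hb' hf C hFR

end P2601
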